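/- arXiv:1206.5017 — 3 statements merged into one kernel-verified Lean document; each statement's English description precedes it below -/
import Mathlib

section
/- For any Borel set A ⊆ ℝ, the function (ρ, ξ) ↦ ν(ρA + ξ), where ν is the standard Gaussian measure on ℝ and ρA + ξ = {ρa + ξ : a ∈ A}, is infinitely differentiable on (0,∞) × ℝ. -/
open MeasureTheory ProbabilityTheory Set

section Aux
open Real Filter Finset Nat

/-- The linear form `(a, b) ↦ -(t^2/2) * a + t * b`. -/
noncomputable def ellCLM (t : ℝ) : ℝ × ℝ →L[ℝ] ℝ :=
  (-(t ^ 2 / 2)) • ContinuousLinearMap.fst ℝ ℝ ℝ + t • ContinuousLinearMap.snd ℝ ℝ ℝ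

lemma ellCLM_apply (t : ℝ) (p : ℝ × ℝ) : ellCLM t p = -(t ^ 2 / 2) * p.1 + t * p.2 := rfl

lemma ellCLM_norm_le (t : ℝ) : ‖ellCLM t‖ ≤ t ^ 2 / 2 + |t| := by
  refine ContinuousLinearMap.opNorm_le_bound _ (by positivity) fun p => ?_
  rw [ellCLM_apply]
  calc |(-(t ^ 2 / 2) * p.1 + t * p.2)| ≤ |(-(t ^ 2 / 2) * p.1)| + |t * p.2| := abs_add_le _ _
    _ = t ^ 2 / 2 * |p.1| + |t| * |p.2| := by
        rw [abs_mul, abs_mul, abs_neg, abs_of_nonneg (by positivity : (0:ℝ) ≤ t ^ 2 / 2)]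
    _ ≤ t ^ 2 / 2 * ‖p‖ + |t| * ‖p‖ := by
        have h1 : |p.1| ≤ ‖p‖ := (Real.norm_eq_abs p.1) ▸ norm_fst_le p
        have h2 : |p.2| ≤ ‖p‖ := (Real.norm_eq_abs p.2) ▸ norm_snd_le p
        gcongr
    _ = (t ^ 2 / 2 + |t|) * ‖p‖ := by ring

lemma ellCLM_cont : Continuous ellCLM := by
  exact (Continuous.smul (by fun_prop : Continuous fun t : ℝ => -(t ^ 2 / 2)) continuous_const).add
    (Continuous.smul continuous_id continuous_const)

/-- Gaussian-type integrability. -/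
lemma integrable_M1 {a : ℝ} (ha : 0 < a) (b : ℝ) :
    Integrable (fun t : ℝ => rexp (-(a * t ^ 2 / 2) + b * t)) := by
  have h : (fun t : ℝ => rexp (-(a * t ^ 2 / 2) + b * t))
      = fun t : ℝ => rexp (b ^ 2 / (2 * a)) * rexp (-(a / 2) * (t - b / a) ^ 2) := by
    funext t
    rw [← Real.exp_add]
    congr 1
    field_simp
    ring
  rw [h]
  exact ((integrable_exp_neg_mul_sq (half_pos ha)).comp_sub_right (b / a)).const_mul _

lemma pow_le_exp_mul_factorial {x : ℝ} (hx : 0 ≤ x) (n : ℕ) : x ^ n ≤ (n ! : ℝ) * rexp x := by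
  have h := Real.pow_div_factorial_le_exp (x := x) hx n
  have hn : (0:ℝ) < n ! := by positivity
  rw [div_le_iff₀ hn] at h
  linarith [h]

lemma integrable_M3 {a : ℝ} (ha : 0 < a) (b : ℝ) {s : ℝ} (hs : 0 ≤ s) (hsa : s < a) :
    Integrable (fun t : ℝ => rexp (s * (t ^ 2 / 2 + |t|)) * rexp (-(a * t ^ 2 / 2) + b * t)) := by
  have h1 := integrable_M1 (a := a - s) (by linarith) (b + s)
  have h2 := integrable_M1 (a := a - s) (by linarith) (b - s)
  refine ((h1.add h2).mono' (Continuous.aestronglyMeasurable (by fun_prop)) ?_)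
  filter_upwards with t
  have habs : s * |t| ≤ s * t ∨ s * |t| ≤ s * (-t) := by
    rcases abs_cases t with ⟨h, _⟩ | ⟨h, _⟩
    · left; rw [h]
    · right; rw [h]
  have key : rexp (s * (t ^ 2 / 2 + |t|)) * rexp (-(a * t ^ 2 / 2) + b * t)
      ≤ rexp (-((a - s) * t ^ 2 / 2) + (b + s) * t) + rexp (-((a - s) * t ^ 2 / 2) + (b - s) * t) := by
    rw [← Real.exp_add]
    rcases habs with h | h
    · refine le_add_of_le_of_nonneg (Real.exp_le_exp.2 (by nlinarith)) (Real.exp_pos _).le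
    · refine le_add_of_nonneg_of_le (Real.exp_pos _).le (Real.exp_le_exp.2 (by nlinarith))
  rw [Real.norm_eq_abs, abs_of_nonneg (by positivity)]
  exact key

lemma integrable_M2 {a : ℝ} (ha : 0 < a) (b : ℝ) (n : ℕ) :
    Integrable (fun t : ℝ => (t ^ 2 / 2 + |t|) ^ n * rexp (-(a * t ^ 2 / 2) + b * t)) := by
  have h3 := (integrable_M3 ha b (s := a / 2) (by positivity) (by linarith)).const_mul
    (((2 / a) ^ n * n ! : ℝ))
  refine h3.mono' (Continuous.aestronglyMeasurable (by fun_prop)) ?_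
  filter_upwards with t
  have hc : (0:ℝ) ≤ t ^ 2 / 2 + |t| := by positivity
  have key : (t ^ 2 / 2 + |t|) ^ n ≤ (2 / a) ^ n * (n ! : ℝ) * rexp (a / 2 * (t ^ 2 / 2 + |t|)) := by
    have h := pow_le_exp_mul_factorial (x := a / 2 * (t ^ 2 / 2 + |t|)) (by positivity) n
    have h2 : (t ^ 2 / 2 + |t|) ^ n = (2 / a) ^ n * (a / 2 * (t ^ 2 / 2 + |t|)) ^ n := by
      rw [← mul_pow]
      congr 1
      field_simp
    rw [h2, mul_assoc]
    gcongr
  rw [Real.norm_eq_abs, abs_of_nonneg (by positivity : (0:ℝ) ≤ (t ^ 2 / 2 + |t|) ^ n * _)]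
  calc (t ^ 2 / 2 + |t|) ^ n * rexp (-(a * t ^ 2 / 2) + b * t)
      ≤ ((2 / a) ^ n * (n ! : ℝ) * rexp (a / 2 * (t ^ 2 / 2 + |t|))) * rexp (-(a * t ^ 2 / 2) + b * t) := by
        gcongr
    _ = (2 / a) ^ n * (n ! : ℝ) * (rexp (a / 2 * (t ^ 2 / 2 + |t|)) * rexp (-(a * t ^ 2 / 2) + b * t)) := by
        ring

/-- The parametric integral. -/
noncomputable def GInt (A : Set ℝ) (q : ℝ × ℝ) : ℝ :=
  ∫ t in A, rexp (-(q.1 * t ^ 2 / 2) + q.2 * t)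

end Aux

set_option synthInstance.maxHeartbeats 1000000 in
set_option maxHeartbeats 2000000 in
open Real Nat Filter in
theorem analyticAt_GInt (A : Set ℝ) {q₀ : ℝ × ℝ} (hq : 0 < q₀.1) :
    AnalyticAt ℝ (GInt A) q₀ := by
  classical
  set a : ℝ := q₀.1 with ha_def
  set c : ℝ → ℝ := fun t => t ^ 2 / 2 + |t| with hc_def
  set w : ℝ → ℝ := fun t => rexp (-(q₀.1 * t ^ 2 / 2) + q₀.2 * t) with hw_def
  have hwpos : ∀ t, 0 < w t := fun t => Real.exp_pos _
  have hwcont : Continuous w := by fun_prop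
  have hcnn : ∀ t, 0 ≤ c t := fun t => by positivity
  set M : ∀ n : ℕ, ℝ → ContinuousMultilinearMap ℝ (fun _ : Fin n => ℝ × ℝ) ℝ :=
    fun n t => (ContinuousMultilinearMap.mkPiAlgebra ℝ (Fin n) ℝ).compContinuousLinearMap
      (fun _ => ellCLM t) with hM_def
  have hMapply : ∀ n t (v : Fin n → ℝ × ℝ), M n t v = ∏ i, ellCLM t (v i) := by
    intro n t v
    simp [hM_def]
  have hMnorm : ∀ n t, ‖M n t‖ ≤ c t ^ n := by
    intro n t
    calc ‖M n t‖ ≤ ‖ContinuousMultilinearMap.mkPiAlgebra ℝ (Fin n) ℝ‖ * ∏ _i : Fin n, ‖ellCLM t‖ :=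
          ContinuousMultilinearMap.norm_compContinuousLinearMap_le _ _
      _ = ∏ _i : Fin n, ‖ellCLM t‖ := by
          rw [ContinuousMultilinearMap.norm_mkPiAlgebra, one_mul]
      _ ≤ ∏ _i : Fin n, c t :=
          Finset.prod_le_prod (fun _ _ => norm_nonneg _) (fun _ _ => ellCLM_norm_le t)
      _ = c t ^ n := by simp
  have hMcont : ∀ n, Continuous fun t => M n t := by
    intro n
    have h1 : Continuous fun t : ℝ => (fun _ : Fin n => ellCLM t) :=
      continuous_pi fun _ => ellCLM_cont
    exact (ContinuousMultilinearMap.compContinuousLinearMapLRight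
      (ContinuousMultilinearMap.mkPiAlgebra ℝ (Fin n) ℝ)).cont.comp h1
  -- integrability of the vector-valued integrand
  have hInt : ∀ n, IntegrableOn (fun t => w t • M n t) A := by
    intro n
    refine ((integrable_M2 hq q₀.2 n).restrict (s := A)).mono'
      ((hwcont.smul (hMcont n)).aestronglyMeasurable) ?_
    filter_upwards with t
    show ‖w t • M n t‖ ≤ _
    have hns : ‖w t • M n t‖ = ‖w t‖ * ‖M n t‖ := norm_smul (w t) (M n t)
    rw [hns, Real.norm_eq_abs, abs_of_pos (hwpos t)]
    calc w t * ‖M n t‖ ≤ w t * c t ^ n := by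
          have := hMnorm n t
          gcongr
      _ = c t ^ n * w t := mul_comm _ _
  -- integrability of scalar integrands
  have hIntc : ∀ n, IntegrableOn (fun t => c t ^ n * w t) A :=
    fun n => (integrable_M2 hq q₀.2 n).restrict (s := A)
  have hInn : ∀ n, 0 ≤ ∫ t in A, c t ^ n * w t := by
    intro n
    refine integral_nonneg fun t => ?_
    exact mul_nonneg (pow_nonneg (hcnn t) n) (hwpos t).le
  -- key summability estimate
  have hsum : ∀ r : ℝ, 0 ≤ r → r < a →
      Summable (fun n : ℕ => (n ! : ℝ)⁻¹ * (∫ t in A, c t ^ n * w t) * r ^ n) := by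
    intro r hr hra
    set u : ℕ → ℝ := fun n => (n ! : ℝ)⁻¹ * (∫ t in A, c t ^ n * w t) * r ^ n with hu_def
    have hun : ∀ n, 0 ≤ u n := by
      intro n
      exact mul_nonneg (mul_nonneg (by positivity) (hInn n)) (by positivity)
    refine summable_of_sum_range_le hun (c := ∫ t in A, rexp (r * c t) * w t) fun m => ?_
    have hrepr : ∀ n, u n = ∫ t in A, ((n ! : ℝ)⁻¹ * r ^ n) * (c t ^ n * w t) := by
      intro n
      rw [integral_const_mul]
      ring
    calc ∑ n ∈ Finset.range m, u n
        = ∑ n ∈ Finset.range m, ∫ t in A, ((n ! : ℝ)⁻¹ * r ^ n) * (c t ^ n * w t) := by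
          exact Finset.sum_congr rfl fun n _ => hrepr n
      _ = ∫ t in A, ∑ n ∈ Finset.range m, ((n ! : ℝ)⁻¹ * r ^ n) * (c t ^ n * w t) := by
          rw [integral_finset_sum]
          exact fun n _ => (hIntc n).const_mul _
      _ ≤ ∫ t in A, rexp (r * c t) * w t := by
          refine integral_mono (integrable_finset_sum _ fun n _ => (hIntc n).const_mul _)
            ((integrable_M3 hq q₀.2 hr hra).restrict (s := A)) fun t => ?_
          have h1 : ∑ n ∈ Finset.range m, ((n ! : ℝ)⁻¹ * r ^ n) * (c t ^ n * w t)
              = (∑ n ∈ Finset.range m, (r * c t) ^ n / n !) * w t := by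
            rw [Finset.sum_mul]
            refine Finset.sum_congr rfl fun n _ => ?_
            rw [mul_pow]
            ring
          rw [h1]
          have h2 : ∑ n ∈ Finset.range m, (r * c t) ^ n / n ! ≤ rexp (r * c t) :=
            Real.sum_le_exp_of_nonneg (mul_nonneg hr (hcnn t)) m
          exact mul_le_mul_of_nonneg_right h2 (hwpos t).le
  -- the power series
  set p : FormalMultilinearSeries ℝ (ℝ × ℝ) ℝ :=
    fun n => (n ! : ℝ)⁻¹ • ∫ t in A, w t • M n t with hp_def
  have hpnorm : ∀ n, ‖p n‖ ≤ (n ! : ℝ)⁻¹ * ∫ t in A, c t ^ n * w t := by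
    intro n
    show ‖(n ! : ℝ)⁻¹ • ∫ t in A, w t • M n t‖ ≤ _
    have hns : ‖(n ! : ℝ)⁻¹ • ∫ t in A, w t • M n t‖
        = ‖(n ! : ℝ)⁻¹‖ * ‖∫ t in A, w t • M n t‖ := by
      with_unfolding_all exact norm_smul ((n ! : ℝ)⁻¹) (∫ t in A, w t • M n t)
    rw [hns, Real.norm_eq_abs, abs_of_nonneg (by positivity : (0:ℝ) ≤ (n ! : ℝ)⁻¹)]
    refine mul_le_mul_of_nonneg_left ?_ (by positivity)
    refine (norm_integral_le_integral_norm _).trans ?_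
    refine integral_mono (hInt n).norm (hIntc n) fun t => ?_
    show ‖w t • M n t‖ ≤ _
    have hns2 : ‖w t • M n t‖ = ‖w t‖ * ‖M n t‖ := norm_smul (w t) (M n t)
    rw [hns2, Real.norm_eq_abs, abs_of_pos (hwpos t)]
    calc w t * ‖M n t‖ ≤ w t * c t ^ n := by
          have := hMnorm n t
          gcongr
      _ = c t ^ n * w t := mul_comm _ _
  have ha2 : (0:ℝ) < a / 2 := by positivity
  -- the power series converges to GInt A on the ball of radius a/2
  have hball : HasFPowerSeriesOnBall (GInt A) p q₀ (ENNReal.ofReal (a / 2)) := by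
    constructor
    · -- r_le
      have hs : Summable fun n : ℕ => ‖p n‖ * ((a / 2).toNNReal : ℝ) ^ n := by
        refine Summable.of_nonneg_of_le (fun n => by positivity) (fun n => ?_)
          (hsum (a / 2) ha2.le (by linarith))
        rw [Real.coe_toNNReal _ ha2.le]
        exact mul_le_mul_of_nonneg_right (hpnorm n) (by positivity)
      have := FormalMultilinearSeries.le_radius_of_summable p hs
      rwa [ENNReal.ofReal] 
    · exact ENNReal.ofReal_pos.mpr ha2
    · intro y hy
      have hy' : ‖y‖ < a / 2 := by
        rw [EMetric.mem_ball, edist_zero_right, ← ofReal_norm] at hy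
        exact (ENNReal.ofReal_lt_ofReal_iff ha2).mp hy
      have hya : ‖y‖ < a := by linarith
      set F : ℕ → ℝ → ℝ := fun n t => (n ! : ℝ)⁻¹ * (w t * ellCLM t y ^ n) with hF_def
      have hell : ∀ t, |ellCLM t y| ≤ c t * ‖y‖ := by
        intro t
        calc |ellCLM t y| = ‖ellCLM t y‖ := (Real.norm_eq_abs _).symm
          _ ≤ ‖ellCLM t‖ * ‖y‖ := (ellCLM t).le_opNorm y
          _ ≤ c t * ‖y‖ := mul_le_mul_of_nonneg_right (ellCLM_norm_le t) (norm_nonneg y)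
      have hFbound : ∀ n t, ‖F n t‖ ≤ ((n ! : ℝ)⁻¹ * ‖y‖ ^ n) * (c t ^ n * w t) := by
        intro n t
        rw [hF_def, norm_mul, norm_mul, Real.norm_eq_abs, Real.norm_eq_abs, Real.norm_eq_abs,
          abs_of_nonneg (by positivity : (0:ℝ) ≤ (n ! : ℝ)⁻¹), abs_of_pos (hwpos t)]
        have h1 : |ellCLM t y ^ n| ≤ (c t * ‖y‖) ^ n := by
          rw [abs_pow]
          exact pow_le_pow_left₀ (abs_nonneg _) (hell t) n
        calc (n ! : ℝ)⁻¹ * (w t * |ellCLM t y ^ n|)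
            ≤ (n ! : ℝ)⁻¹ * (w t * (c t * ‖y‖) ^ n) := by
              gcongr
          _ = ((n ! : ℝ)⁻¹ * ‖y‖ ^ n) * (c t ^ n * w t) := by rw [mul_pow]; ring
      have hFint : ∀ n, IntegrableOn (F n) A := by
        intro n
        have hellycont : Continuous fun t => ellCLM t y :=
          (ContinuousLinearMap.apply ℝ ℝ y).continuous.comp ellCLM_cont
        have hFcont : Continuous (F n) := continuous_const.mul (hwcont.mul (hellycont.pow n))
        refine ((hIntc n).const_mul ((n ! : ℝ)⁻¹ * ‖y‖ ^ n)).mono'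
          hFcont.aestronglyMeasurable ?_
        filter_upwards with t
        exact hFbound n t
      have hFsum : Summable fun n => ∫ t in A, ‖F n t‖ := by
        refine Summable.of_nonneg_of_le (fun n => integral_nonneg fun t => norm_nonneg _)
          (fun n => ?_) (hsum ‖y‖ (norm_nonneg y) hya)
        calc (∫ t in A, ‖F n t‖)
            ≤ ∫ t in A, ((n ! : ℝ)⁻¹ * ‖y‖ ^ n) * (c t ^ n * w t) :=
              integral_mono (hFint n).norm ((hIntc n).const_mul _) fun t => hFbound n t
          _ = (n ! : ℝ)⁻¹ * (∫ t in A, c t ^ n * w t) * ‖y‖ ^ n := by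
              rw [integral_const_mul]; ring
      have hHasSum := MeasureTheory.hasSum_integral_of_summable_integral_norm hFint hFsum
      have hpapp : ∀ n : ℕ, (p n fun _ : Fin n => y) = ∫ t in A, F n t := by
        intro n
        have h1 : ((∫ t in A, w t • M n t) fun _ : Fin n => y)
            = ∫ t in A, (w t • M n t) (fun _ : Fin n => y) :=
          ContinuousMultilinearMap.integral_apply (hInt n) _
        have h2 : ∀ t, (w t • M n t) (fun _ : Fin n => y) = w t * ellCLM t y ^ n := by
          intro t
          rw [ContinuousMultilinearMap.smul_apply, hMapply, smul_eq_mul]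
          congr 1
          simp
        calc (p n fun _ : Fin n => y)
            = (n ! : ℝ)⁻¹ • ((∫ t in A, w t • M n t) fun _ : Fin n => y) := by
              rw [hp_def]; rfl
          _ = (n ! : ℝ)⁻¹ * ∫ t in A, (w t • M n t) (fun _ : Fin n => y) := by
              rw [h1, smul_eq_mul]
          _ = ∫ t in A, F n t := by
              rw [← integral_const_mul]
              refine integral_congr_ae (Filter.Eventually.of_forall fun t => ?_)
              show (n ! : ℝ)⁻¹ * ((w t • M n t) fun _ : Fin n => y) = F n t
              rw [hF_def, h2 t]
      have htsum : ∀ t, (∑' n : ℕ, F n t) = rexp (-((q₀ + y).1 * t ^ 2 / 2) + (q₀ + y).2 * t) := by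
        intro t
        have hexp : HasSum (fun n : ℕ => ellCLM t y ^ n / n !) (rexp (ellCLM t y)) := by
          rw [Real.exp_eq_exp_ℝ]
          exact NormedSpace.expSeries_div_hasSum_exp (ellCLM t y)
        have h3 := (hexp.mul_right (w t)).tsum_eq
        have h4 : (fun n : ℕ => F n t) = fun n : ℕ => ellCLM t y ^ n / n ! * w t := by
          funext n
          rw [hF_def]
          ring
        rw [h4, h3, hw_def, ← Real.exp_add, ellCLM_apply]
        congr 1
        simp only [Prod.fst_add, Prod.snd_add]
        ring
      have hfinal : (∫ t in A, ∑' n : ℕ, F n t) = GInt A (q₀ + y) := by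
        refine integral_congr_ae (Filter.Eventually.of_forall fun t => ?_) |>.trans rfl
        rw [htsum t]
      rw [show (fun n : ℕ => p n fun _ : Fin n => y) = fun n => ∫ t in A, F n t from
        funext hpapp]
      rw [← hfinal]
      exact hHasSum
  exact hball.analyticAt

open Real in
lemma gaussian_image_eq (A : Set ℝ) (hA : MeasurableSet A) {ρ ξ : ℝ} (hρ : 0 < ρ) :
    ((gaussianReal 0 1) ((fun t => ρ * t + ξ) '' A)).toReal
      = (Real.sqrt (2 * Real.pi))⁻¹ * (ρ * (rexp (-(ξ ^ 2 / 2)) * GInt A (ρ ^ 2, -(ρ * ξ)))) := by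
  have hρ' : ρ ≠ 0 := hρ.ne'
  set T : ℝ → ℝ := fun y => ρ⁻¹ * y + -(ξ / ρ) with hT_def
  have hinv1 : Function.LeftInverse T (fun t => ρ * t + ξ) := by
    intro t
    simp only [hT_def]
    field_simp
    ring
  have hinv2 : Function.RightInverse T (fun t => ρ * t + ξ) := by
    intro y
    simp only [hT_def]
    field_simp
    ring
  have himg : (fun t => ρ * t + ξ) '' A = T ⁻¹' A :=
    congrFun (Set.image_eq_preimage_of_inverse hinv1 hinv2) A
  have hTmeas : Measurable T := (measurable_id.const_mul _).add_const _
  rw [himg, ← Measure.map_apply hTmeas hA]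
  have hcomp : T = (fun y => y + -(ξ / ρ)) ∘ (fun y => ρ⁻¹ * y) := rfl
  have hmap : (gaussianReal 0 1).map T
      = gaussianReal (-(ξ / ρ)) (⟨ρ⁻¹ ^ 2, sq_nonneg _⟩ * 1) := by
    rw [hcomp, ← Measure.map_map (measurable_add_const (-(ξ / ρ))) (measurable_const_mul ρ⁻¹),
      gaussianReal_map_const_mul, gaussianReal_map_add_const]
    norm_num
    congr 1; apply NNReal.eq; change (ρ ^ 2)⁻¹ = (ρ ^ 2)⁻¹ * 1; ring
  have hv : (⟨ρ⁻¹ ^ 2, sq_nonneg _⟩ * 1 : NNReal) ≠ 0 := by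
    simp only [mul_one, ne_eq, ← NNReal.coe_eq_zero, NNReal.coe_mk]
    change ρ⁻¹ ^ 2 * 1 ≠ 0
    simp [hρ']
  rw [hmap, gaussianReal_apply_eq_integral _ hv A,
    ENNReal.toReal_ofReal (integral_nonneg fun x => gaussianPDFReal_nonneg _ _ x)]
  have hvcoe : ((⟨ρ⁻¹ ^ 2, sq_nonneg _⟩ * 1 : NNReal) : ℝ) = ρ⁻¹ ^ 2 := by change ρ⁻¹ ^ 2 * 1 = ρ⁻¹ ^ 2; ring
  have hpdf : ∀ x : ℝ, gaussianPDFReal (-(ξ / ρ)) (⟨ρ⁻¹ ^ 2, sq_nonneg _⟩ * 1) x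
      = ((Real.sqrt (2 * Real.pi))⁻¹ * (ρ * rexp (-(ξ ^ 2 / 2))))
        * rexp (-(ρ ^ 2 * x ^ 2 / 2) + -(ρ * ξ) * x) := by
    intro x
    rw [gaussianPDFReal, hvcoe]
    have hsqrt : Real.sqrt (2 * Real.pi * ρ⁻¹ ^ 2) = Real.sqrt (2 * Real.pi) * ρ⁻¹ := by
      rw [Real.sqrt_mul (by positivity), Real.sqrt_sq (by positivity)]
    have hexp : -(x - -(ξ / ρ)) ^ 2 / (2 * ρ⁻¹ ^ 2)
        = -(ξ ^ 2 / 2) + (-(ρ ^ 2 * x ^ 2 / 2) + -(ρ * ξ) * x) := by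
      field_simp
      ring
    rw [hsqrt, mul_inv, inv_inv, hexp, Real.exp_add, Real.exp_add]
    ring
  calc (∫ x in A, gaussianPDFReal (-(ξ / ρ)) (⟨ρ⁻¹ ^ 2, sq_nonneg _⟩ * 1) x)
      = ∫ x in A, ((Real.sqrt (2 * Real.pi))⁻¹ * (ρ * rexp (-(ξ ^ 2 / 2))))
          * rexp (-(ρ ^ 2 * x ^ 2 / 2) + -(ρ * ξ) * x) :=
        integral_congr_ae (Filter.Eventually.of_forall fun x => hpdf x)
    _ = ((Real.sqrt (2 * Real.pi))⁻¹ * (ρ * rexp (-(ξ ^ 2 / 2))))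
          * ∫ x in A, rexp (-(ρ ^ 2 * x ^ 2 / 2) + -(ρ * ξ) * x) := integral_const_mul _ _
    _ = (Real.sqrt (2 * Real.pi))⁻¹ * (ρ * (rexp (-(ξ ^ 2 / 2)) * GInt A (ρ ^ 2, -(ρ * ξ)))) := by
        rw [GInt]
        ring

/-- For any Borel set `A ⊆ ℝ`, the map `(ρ, ξ) ↦ ν(ρA + ξ)` (ν the standard Gaussian
measure) is infinitely differentiable on `(0,∞) × ℝ`. -/
theorem gaussian_affine_image_smooth (A : Set ℝ) (hA : MeasurableSet A) :
    ContDiffOn ℝ (⊤ : ℕ∞)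
      (fun q : ℝ × ℝ => ((gaussianReal 0 1) ((fun t => q.1 * t + q.2) '' A)).toReal)
      (Set.Ioi (0 : ℝ) ×ˢ (Set.univ : Set ℝ)) := by
  have hG : AnalyticOnNhd ℝ
      (fun q : ℝ × ℝ => (Real.sqrt (2 * Real.pi))⁻¹ *
        (q.1 * (Real.exp (-(q.2 ^ 2 / 2)) * GInt A (q.1 ^ 2, -(q.1 * q.2)))))
      (Set.Ioi (0 : ℝ) ×ˢ (Set.univ : Set ℝ)) := by
    intro q hq
    have hq1 : (0 : ℝ) < q.1 := hq.1
    have h1 : AnalyticAt ℝ (fun q : ℝ × ℝ => (q.1 ^ 2, -(q.1 * q.2))) q :=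
      (analyticAt_fst.pow 2).prod (analyticAt_fst.mul analyticAt_snd).neg
    have h2 : AnalyticAt ℝ (GInt A) (q.1 ^ 2, -(q.1 * q.2)) :=
      analyticAt_GInt A (by simpa using pow_pos hq1 2)
    have hGc : AnalyticAt ℝ ((GInt A) ∘ (fun q : ℝ × ℝ => (q.1 ^ 2, -(q.1 * q.2)))) q :=
      AnalyticAt.comp h2 h1
    have hexp : AnalyticAt ℝ (fun q : ℝ × ℝ => Real.exp (-(q.2 ^ 2 / 2))) q := by
      refine analyticAt_rexp.comp ?_
      exact ((analyticAt_snd.pow 2).div analyticAt_const (by norm_num)).neg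
    exact analyticAt_const.mul (analyticAt_fst.mul (hexp.mul hGc))
  refine (hG.contDiffOn_of_completeSpace).congr fun q hq => ?_
  have hq1 : (0 : ℝ) < q.1 := hq.1
  exact gaussian_image_eq A hA hq1
end

section
/- Let A be a finite union of bounded intervals with nonempty interior and p ∈ (0,1). Define φ_A(r,x) = ν((A − x)/√(1−r)) for r ∈ [0,1), x ∈ ℝ, where ν is the standard Gaussian measure. If the set {(r,x) : φ_A(r,x) ≥ p} is nonempty, then J̃_A(p) := inf{r ∈ [0,1) : ∃x, φ_A(r,x) ≥ p} is attained: there exist r = J̃_A(p) and x ∈ ℝ with φ_A(r,x) ≥ p. -/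
/-!
The Gaussian dilation `φ_A(r, x) = ν((A - x) / √(1 - r))` is the mass that `N(x, 1 - r)` gives
to `A`, so it depends continuously on `(r, x)` for `r < 1` (dominated convergence of the densities,
`A` having finite measure). Since `A` is bounded and the dilation factor is at most `1`, only centres `x` in a fixed
compact interval can reach mass `p > 0`. Hence, below any admissible `r₁`, the admissible pairs
`(r, x)` form a compact set, on which `r` attains its minimum.
-/

open MeasureTheory ProbabilityTheory Set Real Filter Topology
open scoped ENNReal NNReal

namespace ProbabilityTheory

lemma gaussianPDFReal_le_inv_sqrt (m : ℝ) (v : ℝ≥0) (a : ℝ) :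
    gaussianPDFReal m v a ≤ (√(2 * π * v))⁻¹ := by
  rw [gaussianPDFReal]
  refine mul_le_of_le_one_right (by positivity) (exp_le_one_iff.2 ?_)
  exact div_nonpos_of_nonpos_of_nonneg (neg_nonpos.2 (sq_nonneg _)) (by positivity)

lemma continuousAt_gaussianPDFReal {m : ℝ} {v : ℝ≥0} (hv : v ≠ 0) (a : ℝ) :
    ContinuousAt (fun q : ℝ × ℝ≥0 => gaussianPDFReal q.1 q.2 a) (m, v) := by
  have hv' : (v : ℝ) ≠ 0 := by exact_mod_cast hv
  simp only [gaussianPDFReal]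
  refine ContinuousAt.mul (ContinuousAt.inv₀ (by fun_prop) (by positivity)) ?_
  refine continuous_exp.continuousAt.comp (ContinuousAt.div (by fun_prop) (by fun_prop) ?_)
  simpa using hv'

lemma continuousAt_toReal_gaussianReal_apply {A : Set ℝ} (hA : volume A ≠ ∞) {m : ℝ} {v : ℝ≥0}
    (hv : v ≠ 0) :
    ContinuousAt (fun q : ℝ × ℝ≥0 => (gaussianReal q.1 q.2 A).toReal) (m, v) := by
  obtain ⟨w, hw0, hwv⟩ := exists_between (pos_iff_ne_zero.2 hv)
  have hnear : ∀ᶠ q : ℝ × ℝ≥0 in 𝓝 (m, v), w < q.2 :=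
    continuousAt_const.eventually_lt continuousAt_snd hwv
  have hint : ∀ᶠ q : ℝ × ℝ≥0 in 𝓝 (m, v),
      (gaussianReal q.1 q.2 A).toReal = ∫ a in A, gaussianPDFReal q.1 q.2 a := by
    filter_upwards [hnear] with q hq
    rw [gaussianReal_apply_eq_integral _ (hw0.trans hq).ne', ENNReal.toReal_ofReal
      (setIntegral_nonneg_of_ae (ae_of_all _ fun a => gaussianPDFReal_nonneg _ _ _))]
  refine ContinuousAt.congr ?_ (EventuallyEq.symm hint)
  refine continuousAt_of_dominated (bound := fun _ => (√(2 * π * w))⁻¹) ?_ ?_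
    (integrableOn_const hA) (ae_of_all _ (continuousAt_gaussianPDFReal hv))
  · exact .of_forall fun q => (stronglyMeasurable_gaussianPDFReal _ _).aestronglyMeasurable
  · filter_upwards [hnear] with q hq
    refine ae_of_all _ fun a => ?_
    rw [norm_of_nonneg (gaussianPDFReal_nonneg _ _ _)]
    refine (gaussianPDFReal_le_inv_sqrt _ _ _).trans (inv_anti₀ (by positivity) ?_)
    gcongr

lemma gaussianReal_image_standardize (m : ℝ) {v : ℝ≥0} (hv : v ≠ 0) (A : Set ℝ) :
    gaussianReal 0 1 ((fun a => (a - m) / √v) '' A) = gaussianReal m v A := by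
  have hs : √(v : ℝ) ≠ 0 := by positivity
  have hmap : (gaussianReal m v).map (fun a => (a - m) / √v) = gaussianReal 0 1 := by
    have : (fun a : ℝ => (a - m) / √v) = (· / √v) ∘ (· - m) := rfl
    rw [this, ← Measure.map_map (by fun_prop) (by fun_prop), gaussianReal_map_sub_const,
      gaussianReal_map_div_const]
    congr 1
    · simp
    · ext; simp [Real.sq_sqrt, hv]
  have hemb : MeasurableEmbedding (fun a : ℝ => (a - m) / √v) :=
    ((Homeomorph.subRight m).trans (Homeomorph.mulRight₀ _ (inv_ne_zero hs))).measurableEmbedding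
  rw [← hmap, hemb.map_apply, preimage_image_eq _ hemb.injective]

end ProbabilityTheory

namespace MeasureTheory

lemma exists_measure_compl_closedBall_lt {E : Type*} [PseudoMetricSpace E] [CompleteSpace E]
    [SecondCountableTopology E] [MeasurableSpace E] [BorelSpace E]
    (μ : Measure E) [IsFiniteMeasure μ] (x : E) {ε : ℝ≥0∞} (hε : 0 < ε) :
    ∃ T : ℝ, μ (Metric.closedBall x T)ᶜ < ε := by
  have h := tendsto_measure_compl_closedBall_of_isTightMeasureSet
    (isTightMeasureSet_singleton (μ := μ)) x
  simp only [mem_singleton_iff, iSup_iSup_eq_left] at h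
  exact (h.eventually_lt_const hε).exists

end MeasureTheory

lemma exists_abs_le_of_le_gaussianReal_image {A : Set ℝ} (hA : Bornology.IsBounded A) {p : ℝ}
    (hp : 0 < p) :
    ∃ C, ∀ x s : ℝ, 0 < s → s ≤ 1 →
      p ≤ (gaussianReal 0 1 ((fun a => (a - x) / s) '' A)).toReal → |x| ≤ C := by
  obtain ⟨M, hAM⟩ := hA.subset_closedBall 0
  obtain ⟨T, hT⟩ :=
    exists_measure_compl_closedBall_lt (gaussianReal 0 1) 0 (ENNReal.ofReal_pos.2 hp)
  refine ⟨M + T, fun x s hs hs1 hx => ?_⟩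
  by_contra! hfar
  have himage : (fun a => (a - x) / s) '' A ⊆ (Metric.closedBall 0 T)ᶜ := by
    rintro _ ⟨a, ha, rfl⟩
    have haM : |a| ≤ M := by simpa using hAM ha
    have : T < |a - x| / s := calc
      T < |x| - |a| := by linarith
      _ ≤ |a - x| := by simpa [abs_sub_comm] using abs_sub_abs_le_abs_sub x a
      _ ≤ |a - x| / s := le_div_self (abs_nonneg _) hs hs1
    simpa [abs_div, abs_of_pos hs] using this
  exact (ENNReal.toReal_lt_of_lt_ofReal ((measure_mono himage).trans_lt hT)).not_ge hx

noncomputable def gaussianDilation (A : Set ℝ) (r x : ℝ) : ℝ :=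
  (gaussianReal 0 1 ((fun a => (a - x) / √(1 - r)) '' A)).toReal

lemma gaussianDilation_eq_toReal_gaussianReal_apply (A : Set ℝ) {r : ℝ} (hr : r < 1) (x : ℝ) :
    gaussianDilation A r x = (gaussianReal x (1 - r).toNNReal A).toReal := by
  rw [gaussianDilation, ← gaussianReal_image_standardize x (by simpa using hr),
    coe_toNNReal _ (by linarith)]

lemma continuousOn_gaussianDilation {A : Set ℝ} (hA : volume A ≠ ∞) :
    ContinuousOn (fun q : ℝ × ℝ => gaussianDilation A q.1 q.2) (Iio 1 ×ˢ univ) := by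
  rintro ⟨r, x⟩ ⟨hr : r < 1, -⟩
  have hcomp := ContinuousAt.comp (x := (r, x)) (f := fun q : ℝ × ℝ => (q.2, (1 - q.1).toNNReal))
    (continuousAt_toReal_gaussianReal_apply hA (by simpa using hr)) (by fun_prop)
  refine (hcomp.congr ?_).continuousWithinAt
  filter_upwards [continuousAt_fst.eventually_lt continuousAt_const hr] with q hq
  exact (gaussianDilation_eq_toReal_gaussianReal_apply A hq q.2).symm

lemma exists_abs_le_of_le_gaussianDilation {A : Set ℝ} (hA : Bornology.IsBounded A) {p : ℝ}
    (hp : 0 < p) :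
    ∃ C, ∀ r x : ℝ, 0 ≤ r → r < 1 → p ≤ gaussianDilation A r x → |x| ≤ C := by
  obtain ⟨C, hC⟩ := exists_abs_le_of_le_gaussianReal_image hA hp
  refine ⟨C, fun r x hr0 hr1 hx => hC x _ (sqrt_pos.2 (by linarith)) ?_ hx⟩
  exact sqrt_le_one.2 (by linarith)

lemma isCompact_box_inter_gaussianDilation_preimage_Ici {A : Set ℝ} (hA : volume A ≠ ∞)
    {r₁ : ℝ} (hr₁ : r₁ < 1) (C p : ℝ) :
    IsCompact (Icc 0 r₁ ×ˢ Icc (-C) C ∩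
      (fun q : ℝ × ℝ => gaussianDilation A q.1 q.2) ⁻¹' Ici p) := by
  have hcont := (continuousOn_gaussianDilation hA).mono
    fun q (hq : q ∈ Icc 0 r₁ ×ˢ Icc (-C) C) => ⟨hq.1.2.trans_lt hr₁, mem_univ q.2⟩
  exact (isCompact_Icc.prod isCompact_Icc).of_isClosed_subset
    (hcont.preimage_isClosed_of_isClosed (isClosed_Icc.prod isClosed_Icc) isClosed_Ici)
    inter_subset_left

/-- For `A` a finite union of bounded intervals with nonempty interior, if
`{(r,x) : φ_A(r,x) ≥ p}` is nonempty then `J̃_A(p) = inf{r : ∃ x, φ_A(r,x) ≥ p}`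
is attained: there is `x` with `φ_A(J̃_A(p), x) ≥ p`. -/
theorem gaussian_dilation_inf_attained (A : Set ℝ) (p : ℝ) (hp : p ∈ Set.Ioo (0 : ℝ) 1)
    (hA : ∃ (n : ℕ) (I : Fin n → Set ℝ),
      (∀ i, ∃ a b : ℝ, a < b ∧ Set.Ioo a b ⊆ I i ∧ I i ⊆ Set.Icc a b) ∧ A = ⋃ i, I i)
    (hne : {r : ℝ | r ∈ Set.Ico (0 : ℝ) 1 ∧ ∃ x : ℝ,
        p ≤ ((gaussianReal 0 1)
          ((fun a => (a - x) / Real.sqrt (1 - r)) '' A)).toReal}.Nonempty) :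
    ∃ x : ℝ, p ≤ ((gaussianReal 0 1)
      ((fun a => (a - x) / Real.sqrt (1 - sInf {r : ℝ | r ∈ Set.Ico (0 : ℝ) 1 ∧ ∃ x : ℝ,
        p ≤ ((gaussianReal 0 1)
          ((fun a => (a - x) / Real.sqrt (1 - r)) '' A)).toReal})) '' A)).toReal := by
  have hbdd : Bornology.IsBounded A := by
    obtain ⟨n, I, hI, rfl⟩ := hA
    refine Bornology.isBounded_iUnion.2 fun i => ?_
    obtain ⟨a, b, -, -, hab⟩ := hI i
    exact (Metric.isBounded_Icc a b).subset hab
  obtain ⟨C, hC⟩ := exists_abs_le_of_le_gaussianDilation hbdd hp.1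
  set S := {r : ℝ | r ∈ Ico 0 1 ∧ ∃ x, p ≤ gaussianDilation A r x}
  change ∃ x, p ≤ gaussianDilation A (sInf S) x
  obtain ⟨r₁, ⟨hr₁0, hr₁1⟩, x₁, hx₁⟩ := hne
  set K := Icc 0 r₁ ×ˢ Icc (-C) C ∩ (fun q : ℝ × ℝ => gaussianDilation A q.1 q.2) ⁻¹' Ici p
  have hK : IsCompact K :=
    isCompact_box_inter_gaussianDilation_preimage_Ici hbdd.measure_lt_top.ne hr₁1 C p
  have hmemK : ∀ r x, 0 ≤ r → r ≤ r₁ → p ≤ gaussianDilation A r x → (r, x) ∈ K :=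
    fun r x hr0 hr hx => ⟨⟨⟨hr0, hr⟩, abs_le.1 (hC r x hr0 (hr.trans_lt hr₁1) hx)⟩, hx⟩
  obtain ⟨q₀, ⟨⟨⟨hq₀0, hq₀r₁⟩, -⟩, hq₀⟩, hmin⟩ :=
    hK.exists_isMinOn ⟨_, hmemK r₁ x₁ hr₁0 le_rfl hx₁⟩ continuousOn_fst
  have hq₀S : q₀.1 ∈ S := ⟨⟨hq₀0, hq₀r₁.trans_lt hr₁1⟩, q₀.2, hq₀⟩
  have hinf : sInf S = q₀.1 := by
    refine le_antisymm (csInf_le ⟨0, fun r hr => hr.1.1⟩ hq₀S) (le_csInf ⟨_, hq₀S⟩ ?_)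
    rintro r ⟨⟨hr0, -⟩, x, hx⟩
    rcases le_total r r₁ with hr | hr
    · exact hmin (hmemK r x hr0 hr hx)
    · exact hq₀r₁.trans hr
  exact ⟨q₀.2, hinf ▸ hq₀⟩
end

section
/- Let X be a random variable with mean zero satisfying E[e^{θ₀ X}] < ∞ for some θ₀ > 0 and E[(X⁻)²] < ∞. Then the log-moment generating function L(θ) = log E[e^{θX}] satisfies: for every θ₁ ∈ (0, θ₀), there is a constant K (depending only on θ₀, θ₁, E[e^{θ₀X}], and E[(X⁻)²]) such that L(θ) ≤ Kθ²/2 for all θ ∈ [0, θ₁]. -/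
/-!
Split `e^{θx} - 1 - θx` according to the sign of `x`. For `x ≤ 0` it is at most `(θx)²/2`,
which is controlled by `E[(X⁻)²]`. For `x ≥ 0` it is at most `(θx)²/2 · e^{θx}`, and
`x² e^{θx} ≤ (2/δ²) e^{θ₀x}` as soon as `θ + δ ≤ θ₀`. So, with `δ = θ₀ - θ₁`, the quadratic
remainder is dominated by `θ²/2 · G` for a single integrable `G` and all `θ ∈ [0, θ₁]`.
Integrating, `E[X] = 0` gives `E[e^{θX}] ≤ 1 + θ²/2 · E[G]`, and `log y ≤ y - 1` concludes.
-/

open MeasureTheory ProbabilityTheory Real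

namespace Real

lemma exp_le_one_add_add_sq_div_two_of_nonpos {u : ℝ} (hu : u ≤ 0) :
    exp u ≤ 1 + u + u ^ 2 / 2 := by
  have hmono : Monotone fun v : ℝ => exp v - 1 - v - v ^ 2 / 2 := by
    have hderiv : ∀ v : ℝ, HasDerivAt (fun v : ℝ => exp v - 1 - v - v ^ 2 / 2)
        (exp v - 1 - v) v := fun v =>
      ((((hasDerivAt_exp v).sub_const 1).sub (hasDerivAt_id' v)).sub
        ((hasDerivAt_pow 2 v).div_const 2)).congr_deriv (by ring)
    refine monotone_of_deriv_nonneg (fun v => (hderiv v).differentiableAt) fun v => ?_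
    rw [(hderiv v).deriv]
    linarith [add_one_le_exp v]
  linarith [hmono hu, exp_zero]

lemma exp_le_one_add_add_sq_div_two_mul_exp_of_nonneg {u : ℝ} (hu : 0 ≤ u) :
    exp u ≤ 1 + u + u ^ 2 / 2 * exp u := by
  have hmono : Monotone fun v : ℝ => 1 + v + v ^ 2 / 2 * exp v - exp v := by
    have hderiv : ∀ v : ℝ, HasDerivAt (fun v : ℝ => 1 + v + v ^ 2 / 2 * exp v - exp v)
        (1 - (1 - v - v ^ 2 / 2) * exp v) v := fun v =>
      ((((hasDerivAt_id' v).const_add 1).add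
        (((hasDerivAt_pow 2 v).div_const 2).mul (hasDerivAt_exp v))).sub
        (hasDerivAt_exp v)).congr_deriv (by ring)
    refine monotone_of_deriv_nonneg (fun v => (hderiv v).differentiableAt) fun v => ?_
    rw [(hderiv v).deriv, sub_nonneg]
    -- `1 - v - v²/2 ≤ 1 - v ≤ e^{-v}`
    calc (1 - v - v ^ 2 / 2) * exp v ≤ exp (-v) * exp v := by
          gcongr
          linarith [add_one_le_exp (-v), sq_nonneg v]
      _ = 1 := by rw [← exp_add, neg_add_cancel, exp_zero]
  linarith [hmono hu, exp_zero]

lemma sq_le_two_div_sq_mul_exp_mul {δ x : ℝ} (hδ : 0 < δ) (hx : 0 ≤ x) :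
    x ^ 2 ≤ 2 / δ ^ 2 * exp (δ * x) := by
  have h := pow_div_factorial_le_exp _ (mul_nonneg hδ.le hx) 2
  rw [Nat.factorial_two, Nat.cast_ofNat, mul_pow] at h
  rw [div_mul_eq_mul_div, le_div_iff₀ (by positivity)]
  linarith

lemma sq_mul_exp_mul_le {θ δ θ₀ x : ℝ} (hδ : 0 < δ) (hθ : θ + δ ≤ θ₀) (hx : 0 ≤ x) :
    x ^ 2 * exp (θ * x) ≤ 2 / δ ^ 2 * exp (θ₀ * x) :=
  calc x ^ 2 * exp (θ * x) ≤ 2 / δ ^ 2 * exp (δ * x) * exp (θ * x) := by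
        gcongr
        exact sq_le_two_div_sq_mul_exp_mul hδ hx
    _ = 2 / δ ^ 2 * exp ((θ + δ) * x) := by rw [mul_assoc, ← exp_add]; ring_nf
    _ ≤ 2 / δ ^ 2 * exp (θ₀ * x) := by gcongr

lemma exp_mul_le_one_add_add_sq_div_two_mul {θ δ θ₀ x : ℝ} (hθ : 0 ≤ θ) (hδ : 0 < δ)
    (hθδ : θ + δ ≤ θ₀) :
    exp (θ * x) ≤ 1 + θ * x + θ ^ 2 / 2 * (max (-x) 0 ^ 2 + 2 / δ ^ 2 * exp (θ₀ * x)) := by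
  have hexp_nonneg : 0 ≤ 2 / δ ^ 2 * exp (θ₀ * x) := by positivity
  rcases le_total 0 x with hx | hx
  · have hquad := exp_le_one_add_add_sq_div_two_mul_exp_of_nonneg (mul_nonneg hθ hx)
    have htail := sq_mul_exp_mul_le hδ hθδ hx
    calc exp (θ * x) ≤ 1 + θ * x + θ ^ 2 / 2 * (x ^ 2 * exp (θ * x)) := by linarith
      _ ≤ 1 + θ * x + θ ^ 2 / 2 * (max (-x) 0 ^ 2 + 2 / δ ^ 2 * exp (θ₀ * x)) := by
        gcongr
        linarith [sq_nonneg (max (-x) 0)]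
  · have hquad := exp_le_one_add_add_sq_div_two_of_nonpos (mul_nonpos_of_nonneg_of_nonpos hθ hx)
    rw [max_eq_left (neg_nonneg.mpr hx), neg_sq]
    nlinarith

end Real

namespace ProbabilityTheory

variable {Ω : Type*} {m : MeasurableSpace Ω} {μ : Measure Ω} {X : Ω → ℝ} {θ₀ : ℝ}

lemma integrable_of_integrable_exp_mul_of_integrable_negPart_sq [IsFiniteMeasure μ]
    (hθ₀ : 0 < θ₀) (hexp : Integrable (fun ω => exp (θ₀ * X ω)) μ)
    (hsq : Integrable (fun ω => max (-X ω) 0 ^ 2) μ) :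
    Integrable X μ := by
  refine integrable_of_le_of_le
    (aemeasurable_of_aemeasurable_exp_mul hθ₀.ne' hexp.aemeasurable).aestronglyMeasurable
    (g₁ := fun ω => -(1 + max (-X ω) 0 ^ 2)) (g₂ := fun ω => exp (θ₀ * X ω) / θ₀)
    (ae_of_all _ fun ω => ?_) (ae_of_all _ fun ω => ?_)
    ((integrable_const 1).add hsq).neg (hexp.div_const θ₀)
  · show -(1 + max (-X ω) 0 ^ 2) ≤ X ω
    nlinarith [le_max_left (-X ω) 0, le_max_right (-X ω) 0]
  · rw [le_div_iff₀ hθ₀]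
    linarith [add_one_le_exp (θ₀ * X ω)]

lemma integral_exp_mul_le_one_add [IsProbabilityMeasure μ] {θ δ : ℝ} (hθ : 0 ≤ θ)
    (hδ : 0 < δ) (hθδ : θ + δ ≤ θ₀) (hmean : ∫ ω, X ω ∂μ = 0)
    (hexp : Integrable (fun ω => exp (θ₀ * X ω)) μ)
    (hsq : Integrable (fun ω => max (-X ω) 0 ^ 2) μ) :
    ∫ ω, exp (θ * X ω) ∂μ ≤
      1 + θ ^ 2 / 2 * ∫ ω, max (-X ω) 0 ^ 2 + 2 / δ ^ 2 * exp (θ₀ * X ω) ∂μ := by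
  have hθ₀ : 0 < θ₀ := by linarith
  have hX := integrable_of_integrable_exp_mul_of_integrable_negPart_sq hθ₀ hexp hsq
  have hlin : Integrable (fun ω => 1 + θ * X ω) μ := (integrable_const 1).add (hX.const_mul θ)
  have hG : Integrable (fun ω => max (-X ω) 0 ^ 2 + 2 / δ ^ 2 * exp (θ₀ * X ω)) μ :=
    hsq.add (hexp.const_mul _)
  calc ∫ ω, exp (θ * X ω) ∂μ
      ≤ ∫ ω, 1 + θ * X ω + θ ^ 2 / 2 *
          (max (-X ω) 0 ^ 2 + 2 / δ ^ 2 * exp (θ₀ * X ω)) ∂μ :=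
        integral_mono (integrable_exp_mul_of_nonneg_of_le hexp hθ (by linarith))
          (hlin.add (hG.const_mul _))
          fun ω => exp_mul_le_one_add_add_sq_div_two_mul hθ hδ hθδ
    _ = 1 + θ ^ 2 / 2 * ∫ ω, max (-X ω) 0 ^ 2 + 2 / δ ^ 2 * exp (θ₀ * X ω) ∂μ := by
        rw [integral_add hlin (hG.const_mul _),
          integral_add (integrable_const 1) (hX.const_mul θ), integral_const_mul,
          integral_const_mul, hmean]
        simp

end ProbabilityTheory

theorem logMGF_quadratic_bound_general {Ω : Type*} [MeasureSpace Ω]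
    [IsProbabilityMeasure (volume : Measure Ω)]
    (X : Ω → ℝ) (θ₀ : ℝ)
    (hmean : ∫ ω, X ω = 0)
    (hexp : Integrable (fun ω => Real.exp (θ₀ * X ω)))
    (hsq : Integrable (fun ω => (max (-(X ω)) 0) ^ 2)) :
    ∀ θ₁ : ℝ, 0 < θ₁ → θ₁ < θ₀ →
      ∃ K : ℝ, ∀ θ ∈ Set.Icc (0 : ℝ) θ₁,
        Real.log (∫ ω, Real.exp (θ * X ω)) ≤ K * θ ^ 2 / 2 := by
  intro θ₁ hθ₁ hθ₁θ₀
  refine ⟨∫ ω, max (-X ω) 0 ^ 2 + 2 / (θ₀ - θ₁) ^ 2 * Real.exp (θ₀ * X ω), ?_⟩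
  rintro θ ⟨hθ, hθθ₁⟩
  have hmgf := integral_exp_mul_le_one_add hθ (sub_pos.mpr hθ₁θ₀) (by linarith) hmean hexp hsq
  have hpos : 0 < ∫ ω, Real.exp (θ * X ω) :=
    integral_exp_pos (integrable_exp_mul_of_nonneg_of_le hexp hθ (by linarith))
  linarith [Real.log_le_sub_one_of_pos hpos]

/-- For a centered random variable with `E e^{θ₀X} < ∞` and `E (X⁻)² < ∞`, the
log-mgf satisfies `L(θ) ≤ Kθ²/2` on `[0, θ₁]`, for each `θ₁ < θ₀`. -/
theorem logMGF_quadratic_bound {Ω : Type*} [MeasureSpace Ω]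
    [IsProbabilityMeasure (volume : Measure Ω)]
    (X : Ω → ℝ) (hX : Measurable X) (θ₀ : ℝ) (hθ₀ : 0 < θ₀)
    (hmean : ∫ ω, X ω = 0)
    (hexp : Integrable (fun ω => Real.exp (θ₀ * X ω)))
    (hsq : Integrable (fun ω => (max (-(X ω)) 0) ^ 2)) :
    ∀ θ₁ : ℝ, 0 < θ₁ → θ₁ < θ₀ →
      ∃ K : ℝ, ∀ θ ∈ Set.Icc (0 : ℝ) θ₁,
        Real.log (∫ ω, Real.exp (θ * X ω)) ≤ K * θ ^ 2 / 2 :=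
  logMGF_quadratic_bound_general X θ₀ hmean hexp hsq
end
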